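/- Let f : (0,∞) → (0,∞) be nonincreasing (representing t ↦ p_t(0)) and suppose Θ := sup_{t>0} f(t/2)/f(t) < ∞. Then for all t > 0: f(t) · ∫₀ᵗ f(r) dr ≤ ∫₀ᵗ f(t−s) f(s) ds ≤ 2Θ · f(t) · ∫₀ᵗ f(r) dr. -/

import Mathlib

/-!
Write `g s = f (t - s) * f s`. Since `t - s < t`, monotonicity gives `g s ≥ f t * f s`, whence the
lower bound. For the upper bound, `g` is symmetric about `t / 2`, so its integral is twice the
integral over `(0, t / 2)`, where `f (t - s) ≤ f (t / 2) ≤ Θ f t`. The same comparison with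
`f (t / 2)` dominates `g` by `f (t / 2) * (f s + f (t - s))`, which makes `g` integrable.
-/

open MeasureTheory Set

theorem intervalIntegral_eq_two_mul_integral_half_of_symm {g : ℝ → ℝ} {t : ℝ}
    (hg : IntervalIntegrable g volume 0 t) (hsymm : ∀ s, g (t - s) = g s) :
    ∫ s in 0..t, g s = 2 * ∫ s in 0..t / 2, g s := by
  have hhalf : t / 2 ∈ uIcc 0 t := by
    rcases le_total 0 t with h | h
    · exact mem_uIcc.2 (.inl ⟨by linarith, by linarith⟩)
    · exact mem_uIcc.2 (.inr ⟨by linarith, by linarith⟩)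
  have hupper : ∫ s in t / 2..t, g s = ∫ s in 0..t / 2, g s := by
    calc ∫ s in t / 2..t, g s = ∫ s in t / 2..t, g (t - s) := by simp only [hsymm]
      _ = ∫ s in 0..t / 2, g s := by
        rw [intervalIntegral.integral_comp_sub_left g t, sub_self, show t - t / 2 = t / 2 by ring]
  rw [← intervalIntegral.integral_add_adjacent_intervals
    (hg.mono_set (uIcc_subset_uIcc left_mem_uIcc hhalf))
    (hg.mono_set (uIcc_subset_uIcc hhalf right_mem_uIcc)), hupper, two_mul]

section AntitoneOn

variable {f : ℝ → ℝ} {t : ℝ}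

theorem AntitoneOn.apply_sub_le_apply_half (hf : AntitoneOn f (Ioi 0)) (ht : 0 < t) {s : ℝ}
    (hs : s ≤ t / 2) : f (t - s) ≤ f (t / 2) :=
  hf (show (0 : ℝ) < t / 2 by linarith) (show (0 : ℝ) < t - s by linarith) (by linarith)

theorem AntitoneOn.mul_apply_sub_le (hf : AntitoneOn f (Ioi 0)) (hnn : ∀ s > 0, 0 ≤ f s)
    {s : ℝ} (hs : 0 < s) (hst : s < t) :
    f (t - s) * f s ≤ f (t / 2) * (f s + f (t - s)) := by
  have ht : 0 < t := hs.trans hst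
  have hfs := hnn s hs
  have hfts := hnn (t - s) (by linarith)
  rcases le_total s (t / 2) with hle | hge
  · nlinarith [hf.apply_sub_le_apply_half ht hle]
  · have : f s ≤ f (t / 2) := by
      simpa using hf.apply_sub_le_apply_half ht (s := t - s) (by linarith)
    nlinarith

theorem AntitoneOn.intervalIntegrable_mul_apply_sub (hf : AntitoneOn f (Ioi 0))
    (hnn : ∀ s > 0, 0 ≤ f s) (ht : 0 < t) (hint : IntervalIntegrable f volume 0 t) :
    IntervalIntegrable (fun s => f (t - s) * f s) volume 0 t := by
  have hrefl : IntervalIntegrable (fun s => f (t - s)) volume 0 t := by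
    simpa using (hint.comp_sub_left t).symm
  rw [intervalIntegrable_iff_integrableOn_Ioo_of_le ht.le] at hint hrefl ⊢
  refine ((hint.add hrefl).const_mul (f (t / 2))).mono'
    (hrefl.aestronglyMeasurable.mul hint.aestronglyMeasurable) ?_
  filter_upwards [ae_restrict_mem measurableSet_Ioo] with s ⟨hs, hst⟩
  rw [Real.norm_of_nonneg (mul_nonneg (hnn _ (by linarith)) (hnn s hs))]
  exact hf.mul_apply_sub_le hnn hs hst

theorem AntitoneOn.mul_integral_le_integral_mul_apply_sub (hf : AntitoneOn f (Ioi 0))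
    (hnn : ∀ s > 0, 0 ≤ f s) (ht : 0 < t) (hint : IntervalIntegrable f volume 0 t) :
    f t * ∫ s in 0..t, f s ≤ ∫ s in 0..t, f (t - s) * f s := by
  rw [← intervalIntegral.integral_const_mul]
  refine intervalIntegral.integral_mono_on_of_le_Ioo ht.le (hint.const_mul _)
    (hf.intervalIntegrable_mul_apply_sub hnn ht hint) fun s ⟨hs, hst⟩ => ?_
  exact mul_le_mul_of_nonneg_right
    (hf (show 0 < t - s by linarith) ht (by linarith)) (hnn s hs)

theorem AntitoneOn.integral_mul_apply_sub_le (hf : AntitoneOn f (Ioi 0))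
    (hnn : ∀ s > 0, 0 ≤ f s) (ht : 0 < t) (hint : IntervalIntegrable f volume 0 t) :
    ∫ s in 0..t, f (t - s) * f s ≤ 2 * f (t / 2) * ∫ s in 0..t, f s := by
  have hconv := hf.intervalIntegrable_mul_apply_sub hnn ht hint
  have hhalf : (0 : ℝ) ≤ t / 2 := by linarith
  have hsub : uIcc 0 (t / 2) ⊆ uIcc 0 t :=
    uIcc_subset_uIcc_left (mem_uIcc_of_le hhalf (by linarith))
  have hsymm (s : ℝ) : f (t - (t - s)) * f (t - s) = f (t - s) * f s := by
    rw [sub_sub_cancel, mul_comm]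
  calc ∫ s in 0..t, f (t - s) * f s = 2 * ∫ s in 0..t / 2, f (t - s) * f s :=
        intervalIntegral_eq_two_mul_integral_half_of_symm hconv hsymm
    _ ≤ 2 * ∫ s in 0..t / 2, f (t / 2) * f s := by
        gcongr
        refine intervalIntegral.integral_mono_on_of_le_Ioo hhalf (hconv.mono_set hsub)
          ((hint.mono_set hsub).const_mul _) fun s ⟨hs, hst⟩ => ?_
        exact mul_le_mul_of_nonneg_right (hf.apply_sub_le_apply_half ht hst.le) (hnn s hs)
    _ ≤ 2 * (f (t / 2) * ∫ s in 0..t, f s) := by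
        rw [intervalIntegral.integral_const_mul]
        gcongr
        · exact hnn _ (by linarith)
        · refine intervalIntegral.integral_mono_interval le_rfl hhalf (by linarith) ?_ hint
          filter_upwards [ae_restrict_mem measurableSet_Ioc] with s hs using hnn s hs.1
    _ = 2 * f (t / 2) * ∫ s in 0..t, f s := by ring

end AntitoneOn

/-- key convolution estimate for a nonincreasing positive `f` with
doubling constant `Θ`: `f(t)∫₀ᵗ f ≤ ∫₀ᵗ f(t-s)f(s) ds ≤ 2Θ f(t)∫₀ᵗ f`. -/
theorem stmt4 (f : ℝ → ℝ) (hpos : ∀ t > (0:ℝ), 0 < f t)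
    (hmono : ∀ s t : ℝ, 0 < s → s ≤ t → f t ≤ f s)
    (Θ : ℝ) (hΘ : ∀ t > (0:ℝ), f (t / 2) ≤ Θ * f t)
    (hint : ∀ t > (0:ℝ), IntegrableOn f (Set.Ioo 0 t)) :
    ∀ t > (0:ℝ),
      f t * (∫ r in Set.Ioo (0:ℝ) t, f r) ≤ (∫ s in Set.Ioo (0:ℝ) t, f (t - s) * f s)
      ∧ (∫ s in Set.Ioo (0:ℝ) t, f (t - s) * f s)
          ≤ 2 * Θ * (f t * ∫ r in Set.Ioo (0:ℝ) t, f r) := by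
  intro t ht
  have hanti : AntitoneOn f (Ioi 0) := fun s hs r _ hsr => hmono s r hs hsr
  have hnn : ∀ s > 0, 0 ≤ f s := fun s hs => (hpos s hs).le
  have hf : IntervalIntegrable f volume 0 t :=
    (intervalIntegrable_iff_integrableOn_Ioo_of_le ht.le).2 (hint t ht)
  have hI : 0 ≤ ∫ s in Ioo 0 t, f s :=
    setIntegral_nonneg measurableSet_Ioo fun s hs => hnn s hs.1
  simp only [← integral_Ioc_eq_integral_Ioo, ← intervalIntegral.integral_of_le ht.le] at hI ⊢
  refine ⟨hanti.mul_integral_le_integral_mul_apply_sub hnn ht hf, ?_⟩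
  calc ∫ s in 0..t, f (t - s) * f s ≤ 2 * f (t / 2) * ∫ s in 0..t, f s :=
        hanti.integral_mul_apply_sub_le hnn ht hf
    _ ≤ 2 * (Θ * f t) * ∫ s in 0..t, f s := by gcongr; exact hΘ t ht
    _ = 2 * Θ * (f t * ∫ s in 0..t, f s) := by ring
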